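/- arXiv:1609.03789 — 11 statements merged into one kernel-verified Lean document; each statement's English description precedes it below -/
import Mathlib

section
/- Let R be a unital ring with involution and a ∈ R. Then a has a {1,3}-inverse x (i.e., axa = a and (ax)* = ax) if and only if x*a*a = a. -/
/-!
If `a x a = a` and `a x` is self-adjoint, then `x* a* a = (a x)* a = a x a = a`. Conversely,
`x* a* a = a` makes `p = a x` satisfy `p* p = p`; such a `p` is self-adjoint, being of the
form `p* p`, and then `a x a = p* a = x* a* a = a`.
-/

theorem IsSelfAdjoint.of_star_mul_self_eq {R : Type*} [Mul R] [StarMul R] {p : R}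
    (hp : star p * p = p) : IsSelfAdjoint p :=
  hp ▸ IsSelfAdjoint.star_mul_self p

theorem stmt_0 {R : Type*} [Ring R] [StarRing R] (a x : R) :
    (a * x * a = a ∧ star (a * x) = a * x) ↔ star x * star a * a = a := by
  constructor
  · rintro ⟨hinner, hsa⟩
    rw [← star_mul, hsa, hinner]
  · intro h
    have hproj : star (a * x) * (a * x) = a * x := by
      rw [star_mul, ← mul_assoc, h]
    have hsa : star (a * x) = a * x := (IsSelfAdjoint.of_star_mul_self_eq hproj).star_eq
    refine ⟨?_, hsa⟩
    rw [← hsa, star_mul, h]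
end

section
/- Let R be a unital ring with involution and a ∈ R. Then a is {1,3}-invertible if and only if a ∈ Ra*a, i.e., there exists s ∈ R with a = s a* a. -/
/-! If `x` is a {1,3}-inverse of `a`, then `a = (a x)* a = x* a* a`. Conversely, if `a = s a* a`,
then `x = s*` works: taking adjoints gives `a* = a* a s*`, whence `s a* = s a* a s* = a s*` is
self-adjoint and `a s* a = s a* a = a`. -/

section

variable {R : Type*} [Semigroup R] [StarMul R] {a : R}

theorem eq_star_mul_star_mul_self_of_mul_mul_self_eq {x : R} (hx : a * x * a = a)
    (hax : star (a * x) = a * x) : a = star x * star a * a := by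
  rw [← star_mul, hax, hx]

theorem star_eq_star_mul_self_mul_star {s : R} (hs : a = s * star a * a) :
    star a = star a * a * star s := by
  conv_lhs => rw [hs]
  simp only [star_mul, star_star, mul_assoc]

theorem star_mul_star_eq_mul_star_of_eq_mul_star_mul_self {s : R} (hs : a = s * star a * a) :
    star (a * star s) = a * star s := by
  rw [star_mul, star_star]
  calc s * star a = s * (star a * a * star s) := by rw [← star_eq_star_mul_self_mul_star hs]
    _ = s * star a * a * star s := by simp only [mul_assoc]
    _ = a * star s := by rw [← hs]

theorem mul_star_mul_self_eq_self_of_eq_mul_star_mul_self {s : R} (hs : a = s * star a * a) :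
    a * star s * a = a := by
  rw [← star_mul_star_eq_mul_star_of_eq_mul_star_mul_self hs, star_mul, star_star, ← hs]

end

theorem stmt_1 {R : Type*} [Ring R] [StarRing R] (a : R) :
    (∃ x : R, a * x * a = a ∧ star (a * x) = a * x) ↔ ∃ s : R, a = s * star a * a :=
  ⟨fun ⟨x, hx, hax⟩ => ⟨star x, eq_star_mul_star_mul_self_of_mul_mul_self_eq hx hax⟩,
    fun ⟨_, hs⟩ => ⟨_, mul_star_mul_self_eq_self_of_eq_mul_star_mul_self hs,
      star_mul_star_eq_mul_star_of_eq_mul_star_mul_self hs⟩⟩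
end

section
/- Let R be a unital ring with involution, a ∈ R, and n ≥ 1. Then a ∈ R(a*)^n a if and only if a ∈ Ra*a ∩ a^n R. -/
/-!
If `a = x (a*)ⁿ a` with `n ≥ 1`, splitting off one factor `a*` gives `a ∈ R a* a`, and taking
adjoints gives `a* = a* aⁿ x*`; substituting this for the last `a*` in `x (a*)ⁿ a` and folding
`x (a*)ⁿ a` back into `a` yields `a = aⁿ x* a`. Conversely, `a = s a* a` and `a = aⁿ t` give
`a* = t* (a*)ⁿ`, hence `a = s t* (a*)ⁿ a`.
-/

section StarMonoid

variable {R : Type*} [Monoid R] [StarMul R] {a x : R} {n : ℕ}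

theorem eq_mul_star_mul_of_eq_mul_star_pow_succ_mul (h : a = x * star a ^ (n + 1) * a) :
    a = x * star a ^ n * star a * a := by
  rwa [mul_assoc x, ← pow_succ]

theorem eq_pow_succ_mul_of_eq_mul_star_pow_succ_mul (h : a = x * star a ^ (n + 1) * a) :
    a = a ^ (n + 1) * (star x * a) := by
  have hstar : star a = star a * a ^ (n + 1) * star x := by
    conv_lhs => rw [h]
    simp only [star_mul, star_pow, star_star, mul_assoc]
  have hsplit := eq_mul_star_mul_of_eq_mul_star_pow_succ_mul h
  calc a = x * star a ^ n * (star a * a ^ (n + 1) * star x) * a := by rwa [← hstar]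
    _ = (x * star a ^ n * star a * a) * a ^ n * (star x * a) := by
        simp only [pow_succ', mul_assoc]
    _ = a ^ (n + 1) * (star x * a) := by rw [← hsplit, pow_succ', mul_assoc]

theorem eq_mul_star_pow_mul_of_eq_mul_star_mul_of_eq_pow_mul {s t : R}
    (hs : a = s * star a * a) (ht : a = a ^ n * t) : a = s * star t * star a ^ n * a := by
  have hstar : star a = star t * star a ^ n := by
    conv_lhs => rw [ht]
    rw [star_mul, star_pow]
  calc a = s * star a * a := hs
    _ = s * (star t * star a ^ n) * a := by rw [← hstar]
    _ = s * star t * star a ^ n * a := by simp only [mul_assoc]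

end StarMonoid

theorem stmt_2 {R : Type*} [Ring R] [StarRing R] (a : R) (n : ℕ) (hn : 1 ≤ n) :
    (∃ r : R, a = r * (star a) ^ n * a) ↔
      ((∃ r : R, a = r * star a * a) ∧ (∃ r : R, a = a ^ n * r)) := by
  obtain ⟨m, rfl⟩ := Nat.exists_eq_add_of_le' hn
  constructor
  · rintro ⟨x, h⟩
    exact ⟨⟨_, eq_mul_star_mul_of_eq_mul_star_pow_succ_mul h⟩,
      ⟨_, eq_pow_succ_mul_of_eq_mul_star_pow_succ_mul h⟩⟩
  · rintro ⟨⟨s, hs⟩, ⟨t, ht⟩⟩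
    exact ⟨_, eq_mul_star_pow_mul_of_eq_mul_star_mul_of_eq_pow_mul hs ht⟩
end

section
/- Let R be a unital ring with involution, a ∈ R, and n ≥ 1. Then a ∈ R(a*)^n a if and only if R decomposes as the direct sum R = °a ⊕ R(a*)^n, where °a = {x ∈ R : xa = 0}. -/
/-!
Write `b = (a*)ⁿ`. For any `b`, the sum `R = °a + R b` holds iff `a ∈ R b a` (split `1`, and
conversely `y = (y - y r b) + y r b`), and it is direct iff `s b a = 0` forces `s b = 0`. When
`a = r (a*)ⁿ a`, applying the involution gives `a* = a* aⁿ r*`, so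
`(a*)ⁿ = (a*)ⁿ a · aⁿ⁻¹ r*` and every `s (a*)ⁿ` is a right multiple of `s (a*)ⁿ a`.
-/

def IsAnnihilatorDecomposition {R : Type*} [Ring R] (a b y : R) (p : R × R) : Prop :=
  p.1 * a = 0 ∧ (∃ r : R, p.2 = r * b) ∧ y = p.1 + p.2

section Decomposition

variable {R : Type*} [Ring R] {a b : R}

theorem exists_isAnnihilatorDecomposition {r : R} (hr : a = r * b * a) (y : R) :
    ∃ p, IsAnnihilatorDecomposition a b y p := by
  refine ⟨(y - y * r * b, y * r * b), ?_, ⟨y * r, rfl⟩, (sub_add_cancel _ _).symm⟩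
  rw [sub_mul, mul_assoc (y * r), mul_assoc y, ← mul_assoc r, ← hr, sub_self]

theorem IsAnnihilatorDecomposition.unique (hb : ∀ s : R, s * b * a = 0 → s * b = 0) {y : R}
    {p q : R × R} (hp : IsAnnihilatorDecomposition a b y p)
    (hq : IsAnnihilatorDecomposition a b y q) : p = q := by
  obtain ⟨hp₁, ⟨s, hs⟩, hyp⟩ := hp
  obtain ⟨hq₁, ⟨t, ht⟩, hyq⟩ := hq
  have hsum : p.1 + s * b = q.1 + t * b := by rw [← hs, ← ht, ← hyp, ← hyq]
  have hdiff : (s - t) * b * a = 0 := by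
    have := congrArg (· * a) hsum
    simp only [add_mul, hp₁, hq₁, zero_add] at this
    rw [sub_mul, sub_mul, this, sub_self]
  have h₂ : p.2 = q.2 := by rw [hs, ht, ← sub_eq_zero, ← sub_mul, hb _ hdiff]
  have h₁ : p.1 = q.1 := by rw [← hs, ← ht, h₂] at hsum; exact add_right_cancel hsum
  exact Prod.ext h₁ h₂

theorem existsUnique_isAnnihilatorDecomposition_iff :
    (∀ y : R, ∃! p, IsAnnihilatorDecomposition a b y p) ↔
      (∃ r : R, a = r * b * a) ∧ ∀ s : R, s * b * a = 0 → s * b = 0 := by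
  constructor
  · intro h
    obtain ⟨p, ⟨hp, ⟨r, hr⟩, h1⟩, -⟩ := h 1
    refine ⟨⟨r, ?_⟩, fun s hs => ?_⟩
    · calc a = p.1 * a + p.2 * a := by rw [← add_mul, ← h1, one_mul]
        _ = r * b * a := by rw [hp, hr, zero_add]
    · have := (h (s * b)).unique (y₁ := (0, s * b)) (y₂ := (s * b, 0))
        ⟨zero_mul a, ⟨s, rfl⟩, (zero_add _).symm⟩ ⟨hs, ⟨0, (zero_mul b).symm⟩, (add_zero _).symm⟩
      exact (congrArg Prod.fst this).symm
  · rintro ⟨⟨r, hr⟩, hb⟩ y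
    obtain ⟨p, hp⟩ := exists_isAnnihilatorDecomposition hr y
    exact ⟨p, hp, fun q hq => hq.unique hb hp⟩

end Decomposition

theorem mul_star_pow_eq_zero_of_mul_star_pow_mul_eq_zero {R : Type*} [Ring R] [StarRing R]
    {a r s : R} {n : ℕ} (hn : 1 ≤ n) (hr : a = r * star a ^ n * a)
    (hs : s * star a ^ n * a = 0) : s * star a ^ n = 0 := by
  obtain ⟨m, rfl⟩ := Nat.exists_eq_add_of_le' hn
  have hstar : star a = star a * a ^ (m + 1) * star r := by
    conv_lhs => rw [hr]
    simp only [star_mul, star_pow, star_star, mul_assoc]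
  have hpow : star a ^ (m + 1) = star a ^ (m + 1) * (a * (a ^ m * star r)) := by
    calc star a ^ (m + 1) = star a ^ m * (star a * (a * a ^ m) * star r) := by
          rw [← pow_succ', ← hstar, pow_succ]
      _ = star a ^ (m + 1) * (a * (a ^ m * star r)) := by simp only [pow_succ, mul_assoc]
  calc s * star a ^ (m + 1) = s * star a ^ (m + 1) * a * (a ^ m * star r) := by
        rw [mul_assoc (s * _), mul_assoc s, ← hpow]
    _ = 0 := by rw [hs, zero_mul]

theorem stmt_3 {R : Type*} [Ring R] [StarRing R] (a : R) (n : ℕ) (hn : 1 ≤ n) :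
    (∃ r : R, a = r * (star a) ^ n * a) ↔
      ∀ y : R, ∃! p : R × R,
        p.1 * a = 0 ∧ (∃ r : R, p.2 = r * (star a) ^ n) ∧ y = p.1 + p.2 := by
  refine Iff.trans ?_ existsUnique_isAnnihilatorDecomposition_iff.symm
  refine ⟨fun h => ⟨h, fun s hs => ?_⟩, And.left⟩
  obtain ⟨r, hr⟩ := h
  exact mul_star_pow_eq_zero_of_mul_star_pow_mul_eq_zero hn hr hs
end

section
/- Let R be a unital ring with involution, a ∈ R, and n ≥ 1. If R = °a + R(a*)^n (as a sum of additive subgroups, not necessarily direct), then a ∈ R(a*)^n a. -/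
theorem stmt_4_general {R : Type*} [Ring R] [StarRing R] (a : R) (n : ℕ)
    (h : ∀ y : R, ∃ x z : R, x * a = 0 ∧ (∃ r : R, z = r * (star a) ^ n) ∧ y = x + z) :
    ∃ r : R, a = r * (star a) ^ n * a := by
  obtain ⟨x, z, hxa, ⟨r, rfl⟩, hone⟩ := h 1
  refine ⟨r, ?_⟩
  calc a = (x + r * star a ^ n) * a := by rw [← hone, one_mul]
    _ = r * star a ^ n * a := by rw [add_mul, hxa, zero_add]

theorem stmt_4 {R : Type*} [Ring R] [StarRing R] (a : R) (n : ℕ) (hn : 1 ≤ n)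
    (h : ∀ y : R, ∃ x z : R, x * a = 0 ∧ (∃ r : R, z = r * (star a) ^ n) ∧ y = x + z) :
    ∃ r : R, a = r * (star a) ^ n * a :=
  stmt_4_general a n h
end

section
/- Let R be a unital ring with involution, a ∈ R, and n ≥ 1. Then a ∈ a(a*)^n R if and only if a ∈ aa*R ∩ Ra^n. -/
/-!
If `a = a a* x`, applying the involution gives `a* = x* a a*`, and substituting this back
yields `a = a x* a`. For `a = a (a*)ⁿ r` this gives `a ∈ a a* R` directly, and then
`a = a r* aⁿ` because `x = (a*)ⁿ⁻¹ r` has `x* = r* aⁿ⁻¹`. Conversely, `a = s aⁿ` gives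
`a* = (a*)ⁿ s*`, which turns `a = a a* x` into `a = a (a*)ⁿ s* x`.
-/

section StarMonoid

variable {R : Type*} [Monoid R] [StarMul R] {a r s x : R} {n : ℕ}

theorem self_eq_mul_star_mul_self_of_eq_mul_star_mul (h : a = a * star a * x) :
    a = a * star x * a := by
  have hstar : star a = star x * a * star a := by
    simpa only [star_mul, star_star, mul_assoc] using congrArg star h
  calc a = a * star a * x := h
    _ = a * (star x * a * star a) * x := by rw [← hstar]
    _ = a * star x * (a * star a * x) := by simp only [mul_assoc]
    _ = a * star x * a := by rw [← h]

theorem eq_mul_star_mul_of_eq_mul_star_pow_mul (hn : 1 ≤ n) (h : a = a * star a ^ n * r) :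
    a = a * star a * (star a ^ (n - 1) * r) := by
  rwa [← mul_assoc, mul_assoc a, ← pow_succ', Nat.sub_add_cancel hn]

theorem eq_mul_star_mul_pow_of_eq_mul_star_pow_mul (hn : 1 ≤ n) (h : a = a * star a ^ n * r) :
    a = a * star r * a ^ n := by
  calc a = a * star (star a ^ (n - 1) * r) * a :=
        self_eq_mul_star_mul_self_of_eq_mul_star_mul (eq_mul_star_mul_of_eq_mul_star_pow_mul hn h)
    _ = a * star r * a ^ (n - 1 + 1) := by
        simp only [star_mul, star_pow, star_star, pow_succ, mul_assoc]
    _ = a * star r * a ^ n := by rw [Nat.sub_add_cancel hn]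

theorem eq_mul_star_pow_mul_of_eq_mul_pow (hs : a = s * a ^ n) (hx : a = a * star a * x) :
    a = a * star a ^ n * (star s * x) := by
  have hstar : star a = star a ^ n * star s := by
    simpa only [star_mul, star_pow] using congrArg star hs
  calc a = a * star a * x := hx
    _ = a * (star a ^ n * star s) * x := by rw [← hstar]
    _ = a * star a ^ n * (star s * x) := by simp only [mul_assoc]

end StarMonoid

theorem stmt_5 {R : Type*} [Ring R] [StarRing R] (a : R) (n : ℕ) (hn : 1 ≤ n) :
    (∃ r : R, a = a * (star a) ^ n * r) ↔
      ((∃ r : R, a = a * star a * r) ∧ (∃ r : R, a = r * a ^ n)) := by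
  constructor
  · rintro ⟨r, hr⟩
    exact ⟨⟨_, eq_mul_star_mul_of_eq_mul_star_pow_mul hn hr⟩,
      ⟨_, eq_mul_star_mul_pow_of_eq_mul_star_pow_mul hn hr⟩⟩
  · rintro ⟨⟨x, hx⟩, s, hs⟩
    exact ⟨_, eq_mul_star_pow_mul_of_eq_mul_pow hs hx⟩
end

section
/- Let R be a unital ring with involution, a ∈ R, and n ≥ 2. Then a is core invertible if and only if a ∈ R(a*)^n a ∩ Ra^n. Moreover, if a = s (a*)^n a for some s ∈ R (and a ∈ Ra^n), then the core inverse of a equals a^{n-1} s*. -/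
/-!
A core inverse is exactly an `x` with `a x a = a`, `(a x)* = a x`, `x a² = a` and `a x² = x`.
From these, `a = x^(n-1) aⁿ` and, starring `a* = a* (a x) = a* aⁿ xⁿ`, `a = (x*)ⁿ (a*)ⁿ a`.
Conversely, `a = s (a*)ⁿ a` makes `x = a^(n-1) s*` a {1,3}-inverse of `a`, and since `n ≥ 2`
this `x` lies in `a R`; together with `a ∈ R aⁿ`, which lets one cancel `a²` on the left,
this gives the two remaining equations. Uniqueness of the core inverse yields the formula.
-/

/-- `x` is the core inverse of `a`. -/
def IsCoreInverse {R : Type*} [Ring R] [StarRing R] (a x : R) : Prop :=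
  a * x * a = a ∧
    {y : R | ∃ r : R, y = x * r} = {y : R | ∃ r : R, y = a * r} ∧
    {y : R | ∃ r : R, y = r * x} = {y : R | ∃ r : R, y = r * star a}

section Monoid

variable {M : Type*} [Monoid M]

theorem setOf_eq_mul_right_eq_iff {x a : M} :
    {y : M | ∃ r, y = x * r} = {y | ∃ r, y = a * r} ↔ (∃ c, x = a * c) ∧ ∃ c, a = x * c := by
  refine ⟨fun h => ⟨?_, ?_⟩, fun ⟨⟨c, hc⟩, ⟨d, hd⟩⟩ => ?_⟩
  · have hx : x ∈ {y : M | ∃ r, y = x * r} := ⟨1, (mul_one x).symm⟩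
    rwa [h] at hx
  · have ha : a ∈ {y : M | ∃ r, y = a * r} := ⟨1, (mul_one a).symm⟩
    rwa [← h] at ha
  · ext y
    constructor
    · rintro ⟨r, rfl⟩
      exact ⟨c * r, by rw [hc, mul_assoc]⟩
    · rintro ⟨r, rfl⟩
      exact ⟨d * r, by rw [hd, mul_assoc]⟩

theorem setOf_eq_mul_left_eq_iff {x b : M} :
    {y : M | ∃ r, y = r * x} = {y | ∃ r, y = r * b} ↔ (∃ c, x = c * b) ∧ ∃ c, b = c * x := by
  refine ⟨fun h => ⟨?_, ?_⟩, fun ⟨⟨c, hc⟩, ⟨d, hd⟩⟩ => ?_⟩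
  · have hx : x ∈ {y : M | ∃ r, y = r * x} := ⟨1, (one_mul x).symm⟩
    rwa [h] at hx
  · have hb : b ∈ {y : M | ∃ r, y = r * b} := ⟨1, (one_mul b).symm⟩
    rwa [← h] at hb
  · ext y
    constructor
    · rintro ⟨r, rfl⟩
      exact ⟨r * c, by rw [hc, mul_assoc]⟩
    · rintro ⟨r, rfl⟩
      exact ⟨r * d, by rw [hd, mul_assoc]⟩

theorem pow_mul_pow_succ_of_mul_mul_eq {u v : M} (h : u * v * v = v) (k : ℕ) :
    u ^ k * v ^ (k + 1) = v := by
  induction k with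
  | zero => simp
  | succ k ih =>
    calc u ^ (k + 1) * v ^ (k + 1 + 1) = u ^ k * (u * v * v) * v ^ k := by
          rw [pow_succ u k, pow_succ' v (k + 1), pow_succ' v k]; simp only [mul_assoc]
      _ = v := by rw [h, mul_assoc, ← pow_succ', ih]

theorem mul_left_cancel_of_eq_mul_pow {a t y z : M} (m : ℕ) (ha : a = t * a ^ (m + 2))
    (h : a * a * y = a * a * z) : a * y = a * z := by
  rw [ha, pow_add, sq]
  simp only [mul_assoc] at h ⊢
  rw [h]

theorem mul_mul_self_eq_of_eq_mul {a x w : M} (hxa : a * x * a = a) (hx : x = a * w) :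
    a * x * x = x :=
  calc a * x * x = a * x * (a * w) := by rw [← hx]
    _ = a * x * a * w := by simp only [mul_assoc]
    _ = x := by rw [hxa, hx]

theorem mul_mul_eq_of_mul_mul_self_eq {a x : M} (hxaa : x * a * a = a) (hxx : a * x * x = x) :
    x * a * x = x :=
  calc x * a * x = x * a * (a * x * x) := by rw [hxx]
    _ = x * a * a * (x * x) := by simp only [mul_assoc]
    _ = x := by rw [hxaa, ← mul_assoc, hxx]

theorem mul_self_mul_eq_of_eq_mul_pow {a t x w : M} (m : ℕ) (ha : a = t * a ^ (m + 2))
    (hxa : a * x * a = a) (hx : x = a * w) : x * a * a = a := by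
  have key : a * (w * a * a) = a * 1 :=
    mul_left_cancel_of_eq_mul_pow m ha <|
      calc a * a * (w * a * a) = a * (a * w) * a * a := by simp only [mul_assoc]
        _ = a * a * 1 := by rw [← hx, hxa, mul_one]
  calc x * a * a = a * (w * a * a) := by rw [hx]; simp only [mul_assoc]
    _ = a := by rw [key, mul_one]

end Monoid

section StarRing

variable {R : Type*} [Ring R] [StarRing R]

theorem isCoreInverse_iff {a x : R} :
    IsCoreInverse a x ↔
      a * x * a = a ∧ IsSelfAdjoint (a * x) ∧ x * a * a = a ∧ a * x * x = x := by
  simp only [IsCoreInverse, setOf_eq_mul_right_eq_iff, setOf_eq_mul_left_eq_iff]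
  constructor
  · rintro ⟨h1, ⟨⟨c, hc⟩, ⟨d, hd⟩⟩, ⟨⟨w, hw⟩, -⟩⟩
    -- `x ∈ R a*` makes `(a x)* = (a x)(a x)*`, which is self-adjoint
    have key : star (a * x) = a * x * star (a * x) := by
      have hstar : star (a * x) = a * star w * star a := by
        rw [star_mul, hw, star_mul, star_star]
      rw [hstar]
      calc a * star w * star a = a * x * a * (star w * star a) := by rw [h1, ← mul_assoc]
        _ = a * x * (a * star w * star a) := by simp only [mul_assoc]
    have hsa : IsSelfAdjoint (a * x) :=
      IsSelfAdjoint.star_iff.mp (key ▸ IsSelfAdjoint.mul_star_self (a * x))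
    have hax : star a * (a * x) = star a := by rw [← hsa.star_eq, ← star_mul, h1]
    have hxax : x * a * x = x :=
      calc x * a * x = w * (star a * (a * x)) := by nth_rw 1 [hw]; simp only [mul_assoc]
        _ = x := by rw [hax, hw]
    refine ⟨h1, hsa, ?_, mul_mul_self_eq_of_eq_mul h1 hc⟩
    calc x * a * a = x * a * x * d := by rw [mul_assoc (x * a), ← hd]
      _ = a := by rw [hxax, ← hd]
  · rintro ⟨h1, hsa, hxaa, hxx⟩
    refine ⟨h1, ⟨⟨x * x, by rw [← mul_assoc, hxx]⟩, ⟨a * a, by rw [← mul_assoc, hxaa]⟩⟩,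
      ⟨⟨x * star x, ?_⟩, ⟨star a * a, ?_⟩⟩⟩
    · rw [mul_assoc, ← star_mul, hsa.star_eq, ← mul_assoc, mul_mul_eq_of_mul_mul_self_eq hxaa hxx]
    · rw [mul_assoc, ← hsa.star_eq, ← star_mul, h1]

theorem IsCoreInverse.unique {a x y : R} (hx : IsCoreInverse a x) (hy : IsCoreInverse a y) :
    x = y := by
  obtain ⟨hx1, hxs, hxaa, hxx⟩ := isCoreInverse_iff.mp hx
  obtain ⟨hy1, hys, -, hyy⟩ := isCoreInverse_iff.mp hy
  have hxy : a * x = a * y :=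
    calc a * x = star (a * y * (a * x)) := by rw [← mul_assoc, hy1, hxs.star_eq]
      _ = a * y := by rw [star_mul, hxs.star_eq, hys.star_eq, ← mul_assoc, hx1]
  calc x = x * (a * y) := by rw [← hxy, ← mul_assoc, mul_mul_eq_of_mul_mul_self_eq hxaa hxx]
    _ = x * (a * (a * y * y)) := by rw [hyy]
    _ = x * a * a * (y * y) := by simp only [mul_assoc]
    _ = y := by rw [hxaa, ← mul_assoc, hyy]

theorem IsCoreInverse.eq_pow_mul_pow {a x : R} (hx : IsCoreInverse a x) (k : ℕ) :
    a = x ^ k * a ^ (k + 1) :=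
  (pow_mul_pow_succ_of_mul_mul_eq (isCoreInverse_iff.mp hx).2.2.1 k).symm

theorem IsCoreInverse.eq_star_pow_mul_star_pow_mul {a x : R} (hx : IsCoreInverse a x) (k : ℕ) :
    a = star x ^ (k + 1) * star a ^ (k + 1) * a := by
  obtain ⟨h1, hsa, -, hxx⟩ := isCoreInverse_iff.mp hx
  have hax : a * x = a ^ (k + 1) * x ^ (k + 1) := by
    rw [pow_succ', mul_assoc, pow_mul_pow_succ_of_mul_mul_eq hxx]
  have hstar : star a = star a * (a ^ (k + 1) * x ^ (k + 1)) := by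
    rw [← hax, ← hsa.star_eq, ← star_mul, h1]
  simpa only [star_mul, star_star, star_pow, mul_assoc] using congrArg star hstar

theorem mul_star_eq_of_eq_mul_star_mul {a v : R} (h : a = v * star a * a) :
    a * star v = v * star a := by
  have hstar : star a = star a * a * star v := by
    simpa only [star_mul, star_star, mul_assoc] using congrArg star h
  calc a * star v = v * star a * a * star v := by rw [← h]
    _ = v * (star a * a * star v) := by simp only [mul_assoc]
    _ = v * star a := by rw [← hstar]

theorem isCoreInverse_pow_mul_star {a s t : R} (m : ℕ) (hs : a = s * star a ^ (m + 2) * a)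
    (ht : a = t * a ^ (m + 2)) : IsCoreInverse a (a ^ (m + 1) * star s) := by
  have hv : a = s * star a ^ (m + 1) * star a * a := by rw [mul_assoc s, ← pow_succ, ← hs]
  have hcomm := mul_star_eq_of_eq_mul_star_mul hv
  have hx : a ^ (m + 1) * star s = star (s * star a ^ (m + 1)) := by
    rw [star_mul, star_pow, star_star]
  have h1 : a * (a ^ (m + 1) * star s) * a = a := by rw [hx, hcomm, ← hv]
  have hxa : a ^ (m + 1) * star s = a * (a ^ m * star s) := by rw [pow_succ', mul_assoc]
  refine isCoreInverse_iff.mpr ⟨h1, ?_, mul_self_mul_eq_of_eq_mul_pow m ht h1 hxa,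
    mul_mul_self_eq_of_eq_mul h1 hxa⟩
  rw [hx, IsSelfAdjoint, star_mul, star_star, hcomm]

end StarRing

theorem stmt_6 {R : Type*} [Ring R] [StarRing R] (a : R) (n : ℕ) (hn : 2 ≤ n) :
    ((∃ x : R, IsCoreInverse a x) ↔
      ((∃ s : R, a = s * (star a) ^ n * a) ∧ (∃ t : R, a = t * a ^ n))) ∧
    (∀ x s : R, IsCoreInverse a x → a = s * (star a) ^ n * a →
      (∃ t : R, a = t * a ^ n) → x = a ^ (n - 1) * star s) := by
  obtain ⟨m, rfl⟩ : ∃ m, n = m + 2 := ⟨n - 2, by omega⟩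
  refine ⟨⟨fun ⟨x, hx⟩ => ?_, fun ⟨⟨s, hs⟩, ⟨t, ht⟩⟩ => ?_⟩, fun x s hx hs ⟨t, ht⟩ => ?_⟩
  · exact ⟨⟨_, hx.eq_star_pow_mul_star_pow_mul (m + 1)⟩, ⟨_, hx.eq_pow_mul_pow (m + 1)⟩⟩
  · exact ⟨_, isCoreInverse_pow_mul_star m hs ht⟩
  · exact hx.unique (isCoreInverse_pow_mul_star m hs ht)
end

section
/- Let R be a unital ring and a ∈ R, n ≥ 2. Then a is group invertible if and only if a ∈ a^n R ∩ R a^n. -/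
/-!
If `x` is a group inverse of `a`, then `a * x` is an idempotent commuting with `a` and fixing it,
so `a ^ (k + 1) * x ^ k = a * (a * x) ^ k = a`; with `k = n - 1` this puts `a` in `a ^ n R ∩ R a ^ n`.
Conversely, `a ∈ a ^ n R ∩ R a ^ n` with `n ≥ 2` gives `a = a * a * u = v * a * a`, and then
`a * u = v * a` is an idempotent fixing `a` from both sides, and `v * a * u` is the group inverse.
-/

def IsGroupInverse {M : Type*} [Mul M] (a x : M) : Prop :=
  a * x * a = a ∧ x * a * x = x ∧ a * x = x * a

namespace IsGroupInverse

variable {M : Type*} [Monoid M] {a x : M}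

theorem commute (h : IsGroupInverse a x) : Commute a x := h.2.2

theorem mul_mul_self_pow (h : IsGroupInverse a x) (k : ℕ) : a * (a * x) ^ k = a := by
  induction k with
  | zero => rw [pow_zero, mul_one]
  | succ k ih => rw [pow_succ, ← mul_assoc, ih, h.2.2, ← mul_assoc, h.1]

theorem pow_succ_mul_pow (h : IsGroupInverse a x) (k : ℕ) : a ^ (k + 1) * x ^ k = a := by
  rw [pow_succ', mul_assoc, ← h.commute.mul_pow, h.mul_mul_self_pow]

theorem pow_mul_pow_succ (h : IsGroupInverse a x) (k : ℕ) : x ^ k * a ^ (k + 1) = a := by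
  rw [← (h.commute.pow_pow (k + 1) k).eq, h.pow_succ_mul_pow]

end IsGroupInverse

theorem isGroupInverse_of_eq_mul_mul {M : Type*} [Monoid M] {a u v : M}
    (hu : a = a * a * u) (hv : a = v * a * a) : IsGroupInverse a (v * a * u) := by
  have hau : a * u = v * a := by
    calc a * u = v * (a * a * u) := by rw [← mul_assoc, ← mul_assoc, ← hv]
      _ = v * a := by rw [← hu]
  have haua : a * u * a = a := by rw [hau, ← hv]
  have hava : a * v * a = a := by rw [mul_assoc, ← hau, ← mul_assoc, ← hu]
  have hax : a * (v * a * u) = a * u := by rw [← mul_assoc, ← mul_assoc, hava]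
  have hxa : v * a * u * a = a * u := by rw [mul_assoc, mul_assoc, ← mul_assoc a, haua, hau]
  refine ⟨?_, ?_, hax.trans hxa.symm⟩
  · rw [hax, haua]
  · rw [mul_assoc (v * a * u), hax, ← mul_assoc, hxa, hau]

theorem stmt_8 {R : Type*} [Ring R] (a : R) (n : ℕ) (hn : 2 ≤ n) :
    (∃ x : R, a * x * a = a ∧ x * a * x = x ∧ a * x = x * a) ↔
      ((∃ r : R, a = a ^ n * r) ∧ (∃ r : R, a = r * a ^ n)) := by
  change (∃ x, IsGroupInverse a x) ↔ _
  constructor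
  · rintro ⟨x, hx⟩
    obtain ⟨k, rfl⟩ : ∃ k, n = k + 1 := ⟨n - 1, by omega⟩
    exact ⟨⟨x ^ k, (hx.pow_succ_mul_pow k).symm⟩, ⟨x ^ k, (hx.pow_mul_pow_succ k).symm⟩⟩
  · rintro ⟨⟨r, hr⟩, ⟨s, hs⟩⟩
    have hu : a = a * a * (a ^ (n - 2) * r) := by
      rw [← mul_assoc, ← sq, pow_mul_pow_sub a hn, ← hr]
    have hv : a = s * a ^ (n - 2) * a * a := by
      rw [mul_assoc _ a, ← sq, mul_assoc, pow_sub_mul_pow a hn, ← hs]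
    exact ⟨_, isGroupInverse_of_eq_mul_mul hu hv⟩
end

section
/- Let R be a unital ring with involution and suppose a ∈ R is core invertible with core inverse a°. Then for every n ≥ 2, the element p = 1 - a a° is the unique projection satisfying pa = 0 and a^n + p invertible. -/
section PowAddOneSubMul

variable {R : Type*} [Ring R] {a c : R}

theorem pow_succ_mul_pow_succ_of_mul_mul_self (h : a * c * c = c) (n : ℕ) :
    a ^ (n + 1) * c ^ (n + 1) = a * c := by
  induction n with
  | zero => rw [pow_one, pow_one]
  | succ n ih =>
    calc a ^ (n + 2) * c ^ (n + 2) = a * (a ^ (n + 1) * c ^ (n + 1)) * c := by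
          rw [pow_succ' a (n + 1), pow_succ c (n + 1)]; noncomm_ring
      _ = a * c := by rw [ih, mul_assoc a, h]

theorem pow_succ_add_one_sub_mul_mul_eq_one (h₁ : a * c * a = a) (h₂ : a * c * c = c) (n : ℕ) :
    (a ^ (n + 1) + (1 - a * c)) * (c ^ (n + 1) + (1 - c * a)) = 1 := by
  have hpow : a ^ (n + 1) * c ^ (n + 1) = a * c := pow_succ_mul_pow_succ_of_mul_mul_self h₂ n
  have hleft : a ^ (n + 1) * (c * a) = a ^ (n + 1) := by
    rw [pow_succ, mul_assoc, ← mul_assoc a, h₁]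
  have hright : a * c * c ^ (n + 1) = c ^ (n + 1) := by
    rw [pow_succ', ← mul_assoc, h₂]
  have hmid : a * c * (c * a) = c * a := by
    rw [← mul_assoc, h₂]
  simp only [add_mul, mul_add, sub_mul, mul_sub, one_mul, mul_one, hpow, hleft, hright, hmid]
  abel

theorem isUnit_pow_succ_add_one_sub_mul (h₁ : a * c * a = a) (h₂ : c * a * c = c)
    (h₃ : c * a * a = a) (h₄ : a * c * c = c) (n : ℕ) : IsUnit (a ^ (n + 1) + (1 - a * c)) :=
  ⟨⟨_, _, pow_succ_add_one_sub_mul_mul_eq_one h₁ h₄ n,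
    pow_succ_add_one_sub_mul_mul_eq_one h₂ h₃ n⟩, rfl⟩

end PowAddOneSubMul

namespace IsCoreInverse

variable {R : Type*} [Ring R] [StarRing R] {a x : R}

theorem exists_eq_mul (h : IsCoreInverse a x) : ∃ r, x = a * r := by
  have hx : x ∈ {y : R | ∃ r : R, y = x * r} := ⟨1, (mul_one x).symm⟩
  rwa [h.2.1] at hx

theorem exists_eq_inv_mul (h : IsCoreInverse a x) : ∃ r, a = x * r := by
  have ha : a ∈ {y : R | ∃ r : R, y = a * r} := ⟨1, (mul_one a).symm⟩
  rwa [← h.2.1] at ha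

theorem exists_eq_mul_star (h : IsCoreInverse a x) : ∃ r, x = r * star a := by
  have hx : x ∈ {y : R | ∃ r : R, y = r * x} := ⟨1, (one_mul x).symm⟩
  rwa [h.2.2] at hx

theorem mul_inv_mul_inv (h : IsCoreInverse a x) : a * x * x = x := by
  obtain ⟨r, hr⟩ := h.exists_eq_mul
  conv_rhs => rw [hr, ← h.1]
  rw [mul_assoc _ a, ← hr]

theorem isSelfAdjoint_mul_inv (h : IsCoreInverse a x) : IsSelfAdjoint (a * x) := by
  obtain ⟨r, hr⟩ := h.exists_eq_mul_star
  have hstar : star a * star x * star a = star a := by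
    simpa only [star_mul, mul_assoc] using congrArg star h.1
  -- `x = r a* = r a* x* a* = x x* a*`, so `a x = (a x) (a x)*`.
  have hx : x = x * star x * star a := by
    conv_lhs => rw [hr, ← hstar]
    rw [hr]; noncomm_ring
  have hax : a * x = a * x * star (a * x) := by
    conv_lhs => rw [hx]
    rw [star_mul]; noncomm_ring
  rw [IsSelfAdjoint, hax, star_mul, star_star]

theorem star_mul_mul_inv (h : IsCoreInverse a x) : star a * (a * x) = star a := by
  rw [← h.isSelfAdjoint_mul_inv.star_eq, ← star_mul, h.1]

theorem inv_mul_inv (h : IsCoreInverse a x) : x * a * x = x := by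
  obtain ⟨r, hr⟩ := h.exists_eq_mul_star
  calc x * a * x = r * star a * a * x := by rw [← hr]
    _ = r * (star a * (a * x)) := by simp only [mul_assoc]
    _ = x := by rw [h.star_mul_mul_inv, hr]

theorem inv_mul_self_mul_self (h : IsCoreInverse a x) : x * a * a = a := by
  obtain ⟨r, hr⟩ := h.exists_eq_inv_mul
  calc x * a * a = x * a * (x * r) := by rw [← hr]
    _ = a := by rw [← mul_assoc, h.inv_mul_inv, ← hr]

theorem isStarProjection_one_sub_mul_inv (h : IsCoreInverse a x) :
    IsStarProjection (1 - a * x) :=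
  IsStarProjection.one_sub
    ⟨by rw [IsIdempotentElem, ← mul_assoc, h.1], h.isSelfAdjoint_mul_inv⟩

end IsCoreInverse

theorem IsStarProjection.eq_of_mul_eq_zero_of_isUnit_add {R : Type*} [Ring R] [StarRing R]
    {p q y : R} (hq : IsStarProjection q) (hp : IsSelfAdjoint p) (hpy : p * y = 0)
    (hqp : q * p = q) (hu : IsUnit (y + q)) : q = p := by
  have hpq : p * q = q := by
    simpa only [star_mul, hq.isSelfAdjoint.star_eq, hp.star_eq] using congrArg star hqp
  obtain ⟨u, hu⟩ := hu
  have hpu : p = q * ↑u⁻¹ := by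
    rw [← mul_one p, ← u.mul_inv, ← mul_assoc, hu, mul_add, hpy, zero_add, hpq]
  rw [← hqp, hpu, ← mul_assoc, hq.isIdempotentElem.eq]

theorem stmt_11 {R : Type*} [Ring R] [StarRing R] (a c : R) (hc : IsCoreInverse a c) :
    ∀ n : ℕ, 2 ≤ n →
      (1 - a * c) ^ 2 = 1 - a * c ∧ star (1 - a * c) = 1 - a * c ∧
      (1 - a * c) * a = 0 ∧ IsUnit (a ^ n + (1 - a * c)) ∧
      ∀ q : R, q ^ 2 = q → star q = q → q * a = 0 → IsUnit (a ^ n + q) →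
        q = 1 - a * c := by
  intro n hn
  obtain ⟨m, rfl⟩ : ∃ m, n = m + 1 := ⟨n - 1, by omega⟩
  have hp := hc.isStarProjection_one_sub_mul_inv
  have hpa : (1 - a * c) * a = 0 := by rw [sub_mul, one_mul, hc.1, sub_self]
  refine ⟨hp.pow_eq two_ne_zero, hp.isSelfAdjoint.star_eq, hpa,
    isUnit_pow_succ_add_one_sub_mul hc.1 hc.inv_mul_inv hc.inv_mul_self_mul_self
      hc.mul_inv_mul_inv m, fun q hq2 hqs hqa hqu => ?_⟩
  refine IsStarProjection.eq_of_mul_eq_zero_of_isUnit_add ⟨(sq q).symm.trans hq2, hqs⟩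
    hp.isSelfAdjoint ?_ ?_ hqu
  · rw [pow_succ', ← mul_assoc, hpa, zero_mul]
  · rw [mul_sub, mul_one, ← mul_assoc, hqa, zero_mul, sub_zero]
end

section
/- Let R be a unital ring with involution, a ∈ R, and n ≥ 1. If a ∈ R a (a*)^n a, then a ∈ a^n a* a^n R. -/
/-!
Write `b = a*` and `n = m + 1`. Applying the involution to `a = r a bⁿ a` gives `b = b aⁿ b r*`.
Substituting this for the last factor `b` of `bⁿ` yields `a = (r a bⁿ a) aᵐ b r* a = aⁿ b r* a`,
and substituting it once more for `b` gives `a = aⁿ b aⁿ (b r* r* a)`.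
-/

theorem star_eq_star_mul_pow_mul_star_mul_star {M : Type*} [Monoid M] [StarMul M] {a r : M}
    {n : ℕ} (h : a = r * (a * star a ^ n * a)) :
    star a = star a * a ^ n * star a * star r := by
  conv_lhs => rw [h]
  simp only [star_mul, star_pow, star_star, mul_assoc]

theorem eq_pow_mul_mul_of_eq_mul_mul_pow_mul {M : Type*} [Monoid M] {a b r s : M} {n : ℕ}
    (hn : 1 ≤ n) (ha : a = r * (a * b ^ n * a)) (hb : b = b * a ^ n * b * s) :
    a = a ^ n * b * s * a := by
  obtain ⟨m, rfl⟩ : ∃ m, n = m + 1 := ⟨n - 1, by omega⟩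
  calc a = r * (a * (b ^ m * b) * a) := by rw [← pow_succ]; exact ha
    _ = r * (a * (b ^ m * (b * a ^ (m + 1) * b * s)) * a) := by rw [← hb]
    _ = r * (a * b ^ (m + 1) * a) * (a ^ m * b * s * a) := by
        rw [pow_succ' a m, pow_succ b m]; simp only [mul_assoc]
    _ = a ^ (m + 1) * b * s * a := by
        rw [← ha, pow_succ']; simp only [mul_assoc]

theorem stmt_18 {R : Type*} [Ring R] [StarRing R] (a : R) (n : ℕ) (hn : 1 ≤ n)
    (h : ∃ r : R, a = r * (a * (star a) ^ n * a)) :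
    ∃ r : R, a = a ^ n * star a * a ^ n * r := by
  obtain ⟨r, hr⟩ := h
  have hstar := star_eq_star_mul_pow_mul_star_mul_star hr
  have ha := eq_pow_mul_mul_of_eq_mul_mul_pow_mul hn hr hstar
  refine ⟨star a * star r * star r * a, ?_⟩
  calc a = a ^ n * star a * star r * a := ha
    _ = a ^ n * (star a * a ^ n * star a * star r) * star r * a := by rw [← hstar]
    _ = a ^ n * star a * a ^ n * (star a * star r * star r * a) := by simp only [mul_assoc]
end

section
/- Let R be a unital ring with involution and n ≥ 2. If for every a ∈ R the condition a ∈ a(a*)^n a R holds exactly when a ∈ R a(a*)^n a holds, then a a* = 1 implies a* a = 1 for every a ∈ R. -/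
/-!
Write `s = star a`, so `a * s = 1` and hence `a ^ k * s ^ k = 1` for all `k`. With `n = k + 1`,
`a * s ^ n * a = s ^ k * a`, so `a = a ^ k * (a * s ^ n * a)` lies in the left ideal `R a s^n a`, and
by hypothesis `a = s ^ k * a * r` for some `r`. Multiplying by `a ^ k` on the left gives
`a * r = a ^ (k + 1)`, so `a = s ^ k * a ^ (k + 1)` and `1 = a * s = s ^ k * a ^ k`. Once `k ≥ 1`,
the two-sided inverse `s ^ k` of `a ^ k` forces `s * a = 1`.
-/

section Monoid

variable {M : Type*} [Monoid M] {a s : M}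

lemma mul_pow_succ_eq_pow_of_mul_eq_one (h : a * s = 1) (k : ℕ) : a * s ^ (k + 1) = s ^ k := by
  rw [pow_succ', ← mul_assoc, h, one_mul]

lemma pow_succ_mul_eq_pow_of_mul_eq_one (h : a * s = 1) (k : ℕ) : a ^ (k + 1) * s = a ^ k := by
  rw [pow_succ, mul_assoc, h, mul_one]

lemma pow_mul_pow_eq_one_of_eq_pow_mul_mul {k : ℕ} {r : M} (h : a * s = 1)
    (ha : a = s ^ k * a * r) : s ^ k * a ^ k = 1 := by
  have har : a * r = a ^ (k + 1) := by
    calc a * r = a ^ k * s ^ k * (a * r) := by rw [pow_mul_pow_eq_one k h, one_mul]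
      _ = a ^ k * a := by rw [mul_assoc, ← mul_assoc (s ^ k), ← ha]
      _ = a ^ (k + 1) := (pow_succ a k).symm
  calc s ^ k * a ^ k = s ^ k * (a * r) * s := by
        rw [har, mul_assoc, pow_succ_mul_eq_pow_of_mul_eq_one h]
    _ = a * s := by rw [← mul_assoc (s ^ k), ← ha]
    _ = 1 := h

lemma mul_eq_one_of_pow_succ_mul_pow_succ_eq_one {k : ℕ} (h : a * s = 1)
    (hk : s ^ (k + 1) * a ^ (k + 1) = 1) : s * a = 1 := by
  calc s * a = s ^ (k + 1) * a ^ (k + 1) * (s * a) := by rw [hk, one_mul]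
    _ = s ^ (k + 1) * a ^ k * (a * s) * a := by simp only [pow_succ, mul_assoc]
    _ = 1 := by rw [h, mul_one, mul_assoc, ← pow_succ, hk]

end Monoid

theorem stmt_19 {R : Type*} [Ring R] [StarRing R] (n : ℕ) (hn : 2 ≤ n)
    (h : ∀ a : R, (∃ r : R, a = a * (star a) ^ n * a * r) ↔
      (∃ r : R, a = r * (a * (star a) ^ n * a))) :
    ∀ a : R, a * star a = 1 → star a * a = 1 := by
  obtain ⟨k, rfl⟩ : ∃ k, n = k + 2 := ⟨n - 2, by omega⟩
  intro a ha
  have hcore : a * star a ^ (k + 2) * a = star a ^ (k + 1) * a := by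
    rw [mul_pow_succ_eq_pow_of_mul_eq_one ha]
  obtain ⟨r, hr⟩ := (h a).mpr ⟨a ^ (k + 1), by
    rw [hcore, ← mul_assoc, pow_mul_pow_eq_one (k + 1) ha, one_mul]⟩
  rw [hcore] at hr
  exact mul_eq_one_of_pow_succ_mul_pow_succ_eq_one ha
    (pow_mul_pow_eq_one_of_eq_pow_mul_mul ha hr)
end
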